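/- arXiv:2203.05403 — 4 statements merged into one kernel-verified Lean document; each statement's English description precedes it below -/
import Mathlib

section
/- Let F : ℝ^b × ℝ^a → ℝ^b be λ-stable with λ ∈ (0,1) and κ-Lipschitz in its input. Let x and x̃ be two input sequences of length T and let h(t;x), h(t;x̃) be the corresponding hidden-state sequences with zero initial states. Then for every t with 1 ≤ t ≤ T, ‖h(t;x) − h(t;x̃)‖ ≤ ((1 − λ^t)/(1 − λ))·κ·‖x − x̃‖_ℓ∞. -/
/-!
The distance `e t = ‖h(t;x) − h(t;x̃)‖` obeys `e (t+1) ≤ λ e t + κ ‖x(t+1) − x̃(t+1)‖`: pass from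
`F(h, u)` to `F(h', u')` through `F(h', u)`, paying `λ` for the state and `κ` for the input.
Unrolling this linear recursion from `e 0 = 0` gives `e t ≤ (1 + λ + ⋯ + λ^(t−1)) κ ‖x − x̃‖_ℓ∞`,
a geometric sum.
-/

open Finset

theorem norm_sub_le_of_lipschitz_left_right {E U : Type*} [SeminormedAddCommGroup E]
    [SeminormedAddCommGroup U] (F : E → U → E) {lam kappa : ℝ}
    (hstable : ∀ h h' u, ‖F h u - F h' u‖ ≤ lam * ‖h - h'‖)
    (hlip : ∀ h u u', ‖F h u - F h u'‖ ≤ kappa * ‖u - u'‖) (h h' : E) (u u' : U) :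
    ‖F h u - F h' u'‖ ≤ lam * ‖h - h'‖ + kappa * ‖u - u'‖ :=
  (norm_sub_le_norm_sub_add_norm_sub _ (F h' u) _).trans (add_le_add (hstable _ _ _) (hlip _ _ _))

theorem le_geom_sum_mul_of_le_mul_add {e : ℕ → ℝ} {lam c : ℝ} (hlam : 0 ≤ lam) (he0 : e 0 ≤ 0)
    {t : ℕ} (hstep : ∀ n < t, e (n + 1) ≤ lam * e n + c) :
    e t ≤ (∑ i ∈ range t, lam ^ i) * c := by
  induction t with
  | zero => simpa using he0
  | succ t ih =>
    calc e (t + 1) ≤ lam * e t + c := hstep t t.lt_succ_self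
      _ ≤ lam * ((∑ i ∈ range t, lam ^ i) * c) + c := by
          gcongr
          exact ih fun n hn => hstep n (hn.trans t.lt_succ_self)
      _ = (∑ i ∈ range (t + 1), lam ^ i) * c := by rw [geom_sum_succ]; ring

/-- For a λ-stable, κ-input-Lipschitz RNN with zero initial states,
for every `1 ≤ t ≤ T`, `‖h(t;x) − h(t;x̃)‖ ≤ ((1 − λ^t)/(1 − λ))·κ·‖x − x̃‖_ℓ∞`. -/
theorem stmt_1 {a b : ℕ}
    (F : EuclideanSpace ℝ (Fin b) → EuclideanSpace ℝ (Fin a) → EuclideanSpace ℝ (Fin b))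
    (lam kappa : ℝ) (hlam0 : 0 < lam) (hlam1 : lam < 1) (hkappa : 0 < kappa)
    (hstable : ∀ (h h' : EuclideanSpace ℝ (Fin b)) (u : EuclideanSpace ℝ (Fin a)),
      ‖F h u - F h' u‖ ≤ lam * ‖h - h'‖)
    (hlip : ∀ (h : EuclideanSpace ℝ (Fin b)) (u u' : EuclideanSpace ℝ (Fin a)),
      ‖F h u - F h u'‖ ≤ kappa * ‖u - u'‖)
    (T : ℕ) (hT : 1 ≤ T)
    (x xt : ℕ → EuclideanSpace ℝ (Fin a))
    (h ht : ℕ → EuclideanSpace ℝ (Fin b))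
    (h0 : h 0 = 0) (ht0 : ht 0 = 0)
    (hrec : ∀ t, h (t + 1) = F (h t) (x (t + 1)))
    (htrec : ∀ t, ht (t + 1) = F (ht t) (xt (t + 1))) :
    ∀ t : ℕ, 1 ≤ t → t ≤ T →
      ‖h t - ht t‖ ≤ ((1 - lam ^ t) / (1 - lam)) * kappa *
        (Finset.Icc 1 T).sup' (Finset.nonempty_Icc.mpr hT)
          (fun s => ‖x s - xt s‖) := by
  intro t _ htT
  set M := (Icc 1 T).sup' (nonempty_Icc.mpr hT) fun s => ‖x s - xt s‖
  have hinput : ∀ n < t, ‖x (n + 1) - xt (n + 1)‖ ≤ M := fun n hn =>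
    le_sup' (fun s => ‖x s - xt s‖) (mem_Icc.mpr ⟨n.succ_pos, by omega⟩)
  have hstep : ∀ n < t, ‖h (n + 1) - ht (n + 1)‖ ≤ lam * ‖h n - ht n‖ + kappa * M := by
    intro n hn
    rw [hrec, htrec]
    refine (norm_sub_le_of_lipschitz_left_right F hstable hlip _ _ _ _).trans ?_
    gcongr
    exact hinput n hn
  calc ‖h t - ht t‖ ≤ (∑ i ∈ range t, lam ^ i) * (kappa * M) :=
        le_geom_sum_mul_of_le_mul_add (e := fun n => ‖h n - ht n‖) hlam0.le
          (by simp [h0, ht0]) hstep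
    _ = ((1 - lam ^ t) / (1 - lam)) * kappa * M := by
        rw [geom_sum_eq hlam1.ne, ← neg_div_neg_eq, neg_sub, neg_sub, mul_assoc]
end

section
/- Let F : ℝ^b × ℝ^a → ℝ^b be λ-stable with λ ∈ (0,1) and κ-Lipschitz in its input, let W_c be an m × b real matrix and b_c ∈ ℝ^m, and for an input sequence x of length T define q(T;x) = W_c·h(T;x) + b_c, where h(t;x) are the hidden states with zero initial state. Then for any two input sequences x and x̃ of length T, ‖q(T;x) − q(T;x̃)‖ ≤ ‖W_c‖·(κ/(1 − λ))·‖x − x̃‖_ℓ∞, where ‖W_c‖ is the operator norm induced by the Euclidean norms. -/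
/-!
Subtracting the two recursions and splitting through `F (h̃ t) (x (t+1))`, the distance
`d t = ‖h t - h̃ t‖` obeys `d (t+1) ≤ λ d t + κ ‖x - x̃‖_ℓ∞`. The fixed point `κ ‖x - x̃‖_ℓ∞ / (1 - λ)`
of this affine contraction is then an invariant upper bound, and the classification layer adds
only the factor `‖W_c‖`, the bias cancelling in the difference.
-/

theorem le_div_one_sub_of_le_mul_add {d : ℕ → ℝ} {lam c : ℝ} {T : ℕ}
    (hlam0 : 0 ≤ lam) (hlam1 : lam < 1) (h0 : d 0 ≤ c / (1 - lam))
    (hstep : ∀ n < T, d (n + 1) ≤ lam * d n + c) :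
    ∀ t ≤ T, d t ≤ c / (1 - lam) := by
  intro t
  induction t with
  | zero => exact fun _ => h0
  | succ n ih =>
    intro hn
    have h1lam : 1 - lam ≠ 0 := by linarith
    calc d (n + 1) ≤ lam * d n + c := hstep n hn
      _ ≤ lam * (c / (1 - lam)) + c := by gcongr; exact ih (by omega)
      _ = c / (1 - lam) := by field_simp; ring

section RNN

variable {H U : Type*} [SeminormedAddCommGroup H] [SeminormedAddCommGroup U]

theorem norm_sub_le_of_stable_of_lipschitz (F : H → U → H) {lam kappa : ℝ}
    (hlam0 : 0 ≤ lam) (hlam1 : lam < 1) (hkappa : 0 ≤ kappa)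
    (hstable : ∀ (h h' : H) (u : U), ‖F h u - F h' u‖ ≤ lam * ‖h - h'‖)
    (hlip : ∀ (h : H) (u u' : U), ‖F h u - F h u'‖ ≤ kappa * ‖u - u'‖)
    {x x' : ℕ → U} {h h' : ℕ → H} (h0 : h 0 = h' 0)
    (hrec : ∀ t, h (t + 1) = F (h t) (x (t + 1)))
    (hrec' : ∀ t, h' (t + 1) = F (h' t) (x' (t + 1)))
    {T : ℕ} {M : ℝ} (hM0 : 0 ≤ M) (hM : ∀ s ∈ Finset.Icc 1 T, ‖x s - x' s‖ ≤ M) :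
    ∀ t ≤ T, ‖h t - h' t‖ ≤ kappa * M / (1 - lam) := by
  refine le_div_one_sub_of_le_mul_add hlam0 hlam1 ?_ fun n hn => ?_
  · rw [h0, sub_self, norm_zero]
    have : 0 < 1 - lam := by linarith
    positivity
  · rw [hrec, hrec']
    calc ‖F (h n) (x (n + 1)) - F (h' n) (x' (n + 1))‖
        ≤ ‖F (h n) (x (n + 1)) - F (h' n) (x (n + 1))‖
          + ‖F (h' n) (x (n + 1)) - F (h' n) (x' (n + 1))‖ :=
          norm_sub_le_norm_sub_add_norm_sub _ _ _
      _ ≤ lam * ‖h n - h' n‖ + kappa * ‖x (n + 1) - x' (n + 1)‖ :=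
        add_le_add (hstable _ _ _) (hlip _ _ _)
      _ ≤ lam * ‖h n - h' n‖ + kappa * M := by
        gcongr
        exact hM _ (Finset.mem_Icc.mpr ⟨by omega, hn⟩)

end RNN

/-- With the affine classification layer `q(T;x) = W_c·h(T;x) + b_c` on top of a
λ-stable, κ-input-Lipschitz RNN with zero initial states,
`‖q(T;x) − q(T;x̃)‖ ≤ ‖W_c‖·(κ/(1 − λ))·‖x − x̃‖_ℓ∞`. -/
theorem stmt_3 {a b m : ℕ}
    (F : EuclideanSpace ℝ (Fin b) → EuclideanSpace ℝ (Fin a) → EuclideanSpace ℝ (Fin b))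
    (lam kappa : ℝ) (hlam0 : 0 < lam) (hlam1 : lam < 1) (hkappa : 0 < kappa)
    (hstable : ∀ (h h' : EuclideanSpace ℝ (Fin b)) (u : EuclideanSpace ℝ (Fin a)),
      ‖F h u - F h' u‖ ≤ lam * ‖h - h'‖)
    (hlip : ∀ (h : EuclideanSpace ℝ (Fin b)) (u u' : EuclideanSpace ℝ (Fin a)),
      ‖F h u - F h u'‖ ≤ kappa * ‖u - u'‖)
    (Wc : EuclideanSpace ℝ (Fin b) →L[ℝ] EuclideanSpace ℝ (Fin m))
    (bc : EuclideanSpace ℝ (Fin m))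
    (T : ℕ) (hT : 1 ≤ T)
    (x xt : ℕ → EuclideanSpace ℝ (Fin a))
    (h ht : ℕ → EuclideanSpace ℝ (Fin b))
    (h0 : h 0 = 0) (ht0 : ht 0 = 0)
    (hrec : ∀ t, h (t + 1) = F (h t) (x (t + 1)))
    (htrec : ∀ t, ht (t + 1) = F (ht t) (xt (t + 1))) :
    ‖(Wc (h T) + bc) - (Wc (ht T) + bc)‖ ≤ ‖Wc‖ * (kappa / (1 - lam)) *
      (Finset.Icc 1 T).sup' (Finset.nonempty_Icc.mpr hT)
        (fun s => ‖x s - xt s‖) := by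
  set M := (Finset.Icc 1 T).sup' (Finset.nonempty_Icc.mpr hT) fun s => ‖x s - xt s‖
  have hM : ∀ s ∈ Finset.Icc 1 T, ‖x s - xt s‖ ≤ M := fun s hs =>
    Finset.le_sup' (fun s => ‖x s - xt s‖) hs
  have hM0 : 0 ≤ M := (norm_nonneg _).trans (hM 1 (Finset.mem_Icc.mpr ⟨le_rfl, hT⟩))
  have hstate : ‖h T - ht T‖ ≤ kappa * M / (1 - lam) :=
    norm_sub_le_of_stable_of_lipschitz F hlam0.le hlam1 hkappa.le hstable hlip
      (h0.trans ht0.symm) hrec htrec hM0 hM T le_rfl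
  calc ‖(Wc (h T) + bc) - (Wc (ht T) + bc)‖ = ‖Wc (h T - ht T)‖ := by
        rw [add_sub_add_right_eq_sub, map_sub]
    _ ≤ ‖Wc‖ * ‖h T - ht T‖ := Wc.le_opNorm _
    _ ≤ ‖Wc‖ * (kappa * M / (1 - lam)) := by gcongr
    _ = ‖Wc‖ * (kappa / (1 - lam)) * M := by ring
end

section
/- The softmax map on ℝ^m, defined by softmax(q)_i = exp(q_i)/Σ_{j=1}^m exp(q_j), is 1-Lipschitz with respect to the Euclidean norm: for all q, q' ∈ ℝ^m, ‖softmax(q) − softmax(q')‖ ≤ ‖q − q'‖. -/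
/-!
Write `p = softmax q`. The Jacobian of softmax at `q` is `diag p - p pᵀ`, and for a probability
vector `p` and `c = ∑ j, p j * v j`,
`‖(diag p - p pᵀ) v‖² = ∑ i, p i ^ 2 * (v i - c) ^ 2 ≤ ∑ i, p i * (v i - c) ^ 2
  = ∑ i, p i * v i ^ 2 - c ^ 2 ≤ ‖v‖²`, using `0 ≤ p i ≤ 1` twice.
So every derivative has operator norm at most `1`, and the mean value inequality concludes.
-/

noncomputable def softmax {m : ℕ} (q : EuclideanSpace ℝ (Fin m)) : EuclideanSpace ℝ (Fin m) :=
  (WithLp.equiv 2 (Fin m → ℝ)).symm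
    (fun i => Real.exp (q i) / ∑ j : Fin m, Real.exp (q j))

open Finset Real

section Jacobian

variable {ι : Type*} [Fintype ι]

theorem sum_mul_sub_sq_eq_of_sum_eq_one {p : ι → ℝ} (hp : ∑ i, p i = 1) (v : ι → ℝ) :
    ∑ i, p i * (v i - ∑ j, p j * v j) ^ 2 = ∑ i, p i * v i ^ 2 - (∑ j, p j * v j) ^ 2 := by
  set c := ∑ j, p j * v j
  calc ∑ i, p i * (v i - c) ^ 2
      = ∑ i, p i * v i ^ 2 - 2 * c * ∑ i, p i * v i + c ^ 2 * ∑ i, p i := by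
        simp only [mul_sum, ← sum_sub_distrib, ← sum_add_distrib]
        exact sum_congr rfl fun i _ => by ring
    _ = ∑ i, p i * v i ^ 2 - c ^ 2 := by rw [hp]; ring

variable [DecidableEq ι]

noncomputable def softmaxJacobian (p : ι → ℝ) : EuclideanSpace ℝ ι →L[ℝ] EuclideanSpace ℝ ι :=
  Matrix.toEuclideanCLM (𝕜 := ℝ) (Matrix.diagonal p - Matrix.vecMulVec p p)

theorem softmaxJacobian_apply (p : ι → ℝ) (v : EuclideanSpace ℝ ι) (i : ι) :
    softmaxJacobian p v i = p i * (v i - ∑ j, p j * v j) := by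
  rw [softmaxJacobian, Matrix.ofLp_toEuclideanCLM]
  simp [Matrix.sub_mulVec, Matrix.mulVec_diagonal, Matrix.vecMulVec_mulVec, dotProduct, mul_sub,
    mul_comm]

theorem norm_softmaxJacobian_le {p : ι → ℝ} (hp : ∀ i, 0 ≤ p i) (hsum : ∑ i, p i = 1) :
    ‖softmaxJacobian p‖ ≤ 1 := by
  refine ContinuousLinearMap.opNorm_le_bound _ zero_le_one fun v => ?_
  have hp1 (i : ι) : p i ≤ 1 := hsum ▸ single_le_sum (fun j _ => hp j) (mem_univ i)
  set c := ∑ j, p j * v j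
  rw [one_mul, ← sq_le_sq₀ (norm_nonneg _) (norm_nonneg _), EuclideanSpace.real_norm_sq_eq,
    EuclideanSpace.real_norm_sq_eq]
  calc ∑ i, softmaxJacobian p v i ^ 2
      = ∑ i, p i ^ 2 * (v i - c) ^ 2 := by simp only [softmaxJacobian_apply, mul_pow, c]
    _ ≤ ∑ i, p i * (v i - c) ^ 2 := by
        gcongr with i
        nlinarith [hp i, hp1 i]
    _ = ∑ i, p i * v i ^ 2 - c ^ 2 := sum_mul_sub_sq_eq_of_sum_eq_one hsum v
    _ ≤ ∑ i, v i ^ 2 := by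
        have := sum_le_sum fun i (_ : i ∈ univ) =>
          mul_le_of_le_one_left (sq_nonneg (v i)) (hp1 i)
        nlinarith [sq_nonneg c]

end Jacobian

variable {m : ℕ}

theorem softmax_apply (q : EuclideanSpace ℝ (Fin m)) (i : Fin m) :
    softmax q i = exp (q i) / ∑ j, exp (q j) := rfl

theorem softmax_nonneg (q : EuclideanSpace ℝ (Fin m)) (i : Fin m) : 0 ≤ softmax q i :=
  div_nonneg (exp_pos _).le (sum_nonneg fun _ _ => (exp_pos _).le)

theorem sum_exp_pos [NeZero m] (q : EuclideanSpace ℝ (Fin m)) : 0 < ∑ j, exp (q j) :=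
  sum_pos (fun _ _ => exp_pos _) univ_nonempty

theorem sum_softmax [NeZero m] (q : EuclideanSpace ℝ (Fin m)) : ∑ i, softmax q i = 1 := by
  simp only [softmax_apply, ← sum_div, div_self (sum_exp_pos q).ne']

theorem hasFDerivAt_softmax [NeZero m] (q : EuclideanSpace ℝ (Fin m)) :
    HasFDerivAt softmax (softmaxJacobian (softmax q)) q := by
  rw [← hasFDerivWithinAt_univ, hasFDerivWithinAt_piLp]
  intro i
  rw [hasFDerivWithinAt_univ]
  have hexp (j : Fin m) := (PiLp.hasFDerivAt_apply (𝕜 := ℝ) 2 q j).exp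
  have hinv := (hasDerivAt_inv (sum_exp_pos q).ne').comp_hasFDerivAt q
    (HasFDerivAt.fun_sum fun j _ => hexp j)
  have hcomp : (fun x => softmax x i) = fun x => exp (x i) * (∑ j, exp (x j))⁻¹ :=
    funext fun _ => div_eq_mul_inv _ _
  rw [hcomp]
  refine ((hexp i).mul hinv).congr_fderiv ?_
  ext v
  simp only [ContinuousLinearMap.comp_apply, add_apply, neg_apply, smul_apply, _root_.sum_apply,
    neg_smul, smul_neg, smul_eq_mul, PiLp.proj_apply, Function.comp_apply, softmaxJacobian_apply,
    softmax_apply, div_mul_eq_mul_div, ← sum_div]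
  field_simp
  ring

theorem lipschitzWith_one_softmax : LipschitzWith 1 (softmax (m := m)) := by
  obtain rfl | hm := m.eq_zero_or_pos
  · rw [Subsingleton.elim softmax id]
    exact LipschitzWith.id
  have : NeZero m := ⟨hm.ne'⟩
  refine lipschitzWith_of_nnnorm_fderiv_le (fun q => (hasFDerivAt_softmax q).differentiableAt)
    fun q => ?_
  rw [(hasFDerivAt_softmax q).fderiv, ← NNReal.coe_le_coe]
  exact norm_softmaxJacobian_le (softmax_nonneg q) (sum_softmax q)

/-- softmax is 1-Lipschitz with respect to the Euclidean norm. -/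
theorem stmt_5 {m : ℕ} (q q' : EuclideanSpace ℝ (Fin m)) :
    ‖softmax q - softmax q'‖ ≤ ‖q - q'‖ := by
  simpa [dist_eq_norm] using lipschitzWith_one_softmax.dist_le_mul q q'
end

section
/- For m ≥ 2 and k ∈ {1,…,m}, let S be a nonempty finite subset of V_k and let ε_k = min over p ∈ S and j ≠ k of d(p, V_j). If p̃ ∈ P_m and there exists p ∈ S with ‖p − p̃‖ < ε_k, then p̃ ∈ V_k. -/
/-!
If `p̃ ∉ V_k`, some coordinate `j ≠ k` of `p̃` is maximal. Moving `p̃` slightly towards the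
vertex `e_j` lands in `V_j`, so `p̃` lies in the closure of `V_j` and `d(p̃, V_j) = 0`. Since
`d(·, V_j)` is 1-Lipschitz, `d(p, V_j) ≤ ‖p - p̃‖ < ε_k ≤ d(p, V_j)`, a contradiction.
-/

/-- The probability simplex `P_m ⊆ ℝ^m`. -/
def probSimplex (m : ℕ) : Set (EuclideanSpace ℝ (Fin m)) :=
  {p | (∀ i, 0 ≤ p i) ∧ ∑ i, p i = 1}

/-- The Voronoi cell `V_k = {p ∈ P_m | p_k > p_j for all j ≠ k}`. -/
def Vcell {m : ℕ} (k : Fin m) : Set (EuclideanSpace ℝ (Fin m)) :=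
  {p | p ∈ probSimplex m ∧ ∀ j, j ≠ k → p j < p k}

open Filter Topology

section
variable {m : ℕ} {q : EuclideanSpace ℝ (Fin m)} {j : Fin m}

lemma one_sub_smul_add_smul_single_mem_Vcell (hq : q ∈ probSimplex m) (hmax : ∀ i, q i ≤ q j)
    {t : ℝ} (ht₀ : 0 < t) (ht₁ : t ≤ 1) :
    (1 - t) • q + t • EuclideanSpace.single j 1 ∈ Vcell j := by
  have hcoord : ∀ i, ((1 - t) • q + t • EuclideanSpace.single j (1 : ℝ)) i
      = (1 - t) * q i + t * if i = j then 1 else 0 := by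
    intro i
    simp
  refine ⟨⟨fun i => ?_, ?_⟩, fun i hij => ?_⟩
  · rw [hcoord]
    have := mul_nonneg (sub_nonneg.2 ht₁) (hq.1 i)
    split_ifs <;> linarith
  · simp only [hcoord, Finset.sum_add_distrib, ← Finset.mul_sum, hq.2]
    simp
  · rw [hcoord, hcoord, if_neg hij, if_pos rfl]
    nlinarith [hmax i]

lemma mem_closure_Vcell_of_forall_le (hq : q ∈ probSimplex m) (hmax : ∀ i, q i ≤ q j) :
    q ∈ closure (Vcell j) := by
  have hlim : Tendsto (fun t : ℝ => (1 - t) • q + t • EuclideanSpace.single j (1 : ℝ))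
      (𝓝[>] 0) (𝓝 q) := by
    have hcont : Continuous (fun t : ℝ => (1 - t) • q + t • EuclideanSpace.single j (1 : ℝ)) := by
      fun_prop
    simpa using (hcont.tendsto 0).mono_left nhdsWithin_le_nhds
  refine mem_closure_of_tendsto hlim ?_
  filter_upwards [Ioc_mem_nhdsGT (zero_lt_one' ℝ)] with t ht
  exact one_sub_smul_add_smul_single_mem_Vcell hq hmax ht.1 ht.2

end

lemma exists_ne_forall_le_of_notMem_Vcell {m : ℕ} {q : EuclideanSpace ℝ (Fin m)} {k : Fin m}
    (hq : q ∈ probSimplex m) (hqk : q ∉ Vcell k) : ∃ j ≠ k, ∀ i, q i ≤ q j := by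
  obtain ⟨j₀, -, hj₀⟩ := Finset.univ.exists_max_image (fun i => q i) ⟨k, Finset.mem_univ k⟩
  by_cases h : j₀ = k
  · subst h
    obtain ⟨j, hjk, hj⟩ : ∃ j ≠ j₀, q j₀ ≤ q j := by
      by_contra! h
      exact hqk ⟨hq, h⟩
    exact ⟨j, hjk, fun i => (hj₀ i (Finset.mem_univ i)).trans hj⟩
  · exact ⟨j₀, h, fun i => hj₀ i (Finset.mem_univ i)⟩

theorem stmt_14_general {m : ℕ} (k : Fin m)
    (S : Finset (EuclideanSpace ℝ (Fin m)))
    (pt : EuclideanSpace ℝ (Fin m)) (hpt : pt ∈ probSimplex m)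
    (p : EuclideanSpace ℝ (Fin m)) (hpS : p ∈ S)
    (hclose : ‖p - pt‖ <
      sInf {d : ℝ | ∃ p' ∈ S, ∃ j : Fin m, j ≠ k ∧ d = Metric.infDist p' (Vcell j)}) :
    pt ∈ Vcell k := by
  by_contra hpk
  obtain ⟨j, hjk, hmax⟩ := exists_ne_forall_le_of_notMem_Vcell hpt hpk
  have hradius : sInf {d : ℝ | ∃ p' ∈ S, ∃ j : Fin m, j ≠ k ∧ d = Metric.infDist p' (Vcell j)}
      ≤ Metric.infDist p (Vcell j) :=
    csInf_le ⟨0, by rintro _ ⟨_, -, _, -, rfl⟩; exact Metric.infDist_nonneg⟩ ⟨p, hpS, j, hjk, rfl⟩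
  have hpt_dist : Metric.infDist pt (Vcell j) = 0 :=
    Metric.infDist_zero_of_mem_closure (mem_closure_Vcell_of_forall_le hpt hmax)
  have hlip := Metric.infDist_le_infDist_add_dist (x := p) (y := pt) (s := Vcell j)
  rw [hpt_dist, zero_add, dist_eq_norm] at hlip
  linarith

/-- for a nonempty finite set S ⊆ V_k with robustness radius
ε_k = min_{p ∈ S, j ≠ k} d(p, V_j), any p̃ ∈ P_m within distance < ε_k of some p ∈ S
lies in V_k. -/
theorem stmt_14 {m : ℕ} (hm : 2 ≤ m) (k : Fin m)
    (S : Finset (EuclideanSpace ℝ (Fin m))) (hS : S.Nonempty)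
    (hSV : ∀ p ∈ S, p ∈ Vcell k)
    (pt : EuclideanSpace ℝ (Fin m)) (hpt : pt ∈ probSimplex m)
    (p : EuclideanSpace ℝ (Fin m)) (hpS : p ∈ S)
    (hclose : ‖p - pt‖ <
      sInf {d : ℝ | ∃ p' ∈ S, ∃ j : Fin m, j ≠ k ∧ d = Metric.infDist p' (Vcell j)}) :
    pt ∈ Vcell k :=
  stmt_14_general k S pt hpt p hpS hclose
end
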